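/- Let (X, μ) be a measure space with μ a finite measure, and let w : X → ℝ be a measurable function with |w(x)| ≤ C for all x, for some constant C > 0. Suppose ∫_X w dμ = 0 and w is not μ-almost-everywhere equal to 0. Then the integral ∫_X w(x)·log(√(w(x)² + a²) − w(x)) dμ(x) tends to −∞ as a → 0⁺. -/

import Mathlib

/-!
For `a > 0` and `t ∈ ℝ`, `√(t² + a²) − t` is at most `a` when `t ≥ 0` and at least `−t` when
`t < 0`; with `−s log s ≤ 1 − s` this bounds the integrand by `max t 0 · log a + 1`. Integrating,
the integral is at most `(∫ w⁺ dμ) · log a + μ(X)`, and `∫ w⁺ dμ > 0` because `w` has zero mean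
without vanishing a.e. Since `log a → −∞` as `a → 0⁺`, the integral tends to `−∞`.
-/

open Filter Real MeasureTheory

lemma sqrt_sq_add_sq_sub_pos {a : ℝ} (ha : a ≠ 0) (t : ℝ) : 0 < √(t ^ 2 + a ^ 2) - t := by
  have : t < √(t ^ 2 + a ^ 2) := lt_sqrt_of_sq_lt (lt_add_of_pos_right _ (by positivity))
  linarith

lemma continuous_mul_log_sqrt_sq_add_sq_sub {a : ℝ} (ha : a ≠ 0) :
    Continuous fun t : ℝ => t * log (√(t ^ 2 + a ^ 2) - t) :=
  continuous_id.mul <| by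
    fun_prop (disch := exact fun t => (sqrt_sq_add_sq_sub_pos ha t).ne')

lemma mul_log_sqrt_sq_add_sq_sub_le {a : ℝ} (ha : 0 < a) (t : ℝ) :
    t * log (√(t ^ 2 + a ^ 2) - t) ≤ max t 0 * log a + 1 := by
  have hpos := sqrt_sq_add_sq_sub_pos ha.ne' t
  rcases lt_trichotomy t 0 with ht | rfl | ht
  · have hle : -t ≤ √(t ^ 2 + a ^ 2) - t := by linarith [sqrt_nonneg (t ^ 2 + a ^ 2)]
    calc t * log (√(t ^ 2 + a ^ 2) - t) ≤ t * log (-t) :=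
          mul_le_mul_of_nonpos_left (log_le_log (neg_pos.mpr ht) hle) ht.le
      _ = negMulLog (-t) := by simp [negMulLog]
      _ ≤ 1 - -t := negMulLog_le_one_sub_self (by linarith)
      _ ≤ max t 0 * log a + 1 := by rw [max_eq_right ht.le]; linarith
  · simp
  · have hle : √(t ^ 2 + a ^ 2) - t ≤ a := by
      have : √(t ^ 2 + a ^ 2) ≤ t + a := sqrt_le_iff.mpr ⟨by positivity, by nlinarith⟩
      linarith
    rw [max_eq_left ht.le]
    linarith [mul_le_mul_of_nonneg_left (log_le_log hpos hle) ht.le]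

lemma integral_max_zero_pos_of_integral_eq_zero {X : Type*} [MeasurableSpace X] {μ : Measure X}
    {w : X → ℝ} (hw : Integrable w μ) (hmean : ∫ x, w x ∂μ = 0)
    (hne : ¬ (w =ᵐ[μ] fun _ => (0 : ℝ))) : 0 < ∫ x, max (w x) 0 ∂μ := by
  refine (integral_nonneg fun x => le_max_right _ _).lt_of_ne fun h => hne ?_
  have hpos : (fun x => max (w x) 0) =ᵐ[μ] 0 :=
    (integral_eq_zero_iff_of_nonneg (fun x => le_max_right _ _) hw.pos_part).mp h.symm
  have hnonpos : w ≤ᵐ[μ] 0 := hpos.mono fun x hx => by simpa using hx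
  exact (integral_eq_iff_of_ae_le hw (integrable_zero _ _ μ) hnonpos).mp (by simpa using hmean)

lemma Continuous.integrable_comp_of_abs_le {X : Type*} [MeasurableSpace X] {μ : Measure X}
    [IsFiniteMeasure μ] {g : ℝ → ℝ} (hg : Continuous g) {w : X → ℝ} (hw : Measurable w)
    {C : ℝ} (hbound : ∀ x, |w x| ≤ C) : Integrable (fun x => g (w x)) μ := by
  obtain ⟨B, hB⟩ := (isCompact_Icc (a := -C) (b := C)).exists_bound_of_continuousOn
    hg.continuousOn
  exact .of_bound (hg.measurable.comp hw).aestronglyMeasurable B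
    (ae_of_all _ fun x => hB _ (abs_le.mp (hbound x)))

theorem integral_tendsto_atBot_of_mean_zero_general {X : Type*} [MeasurableSpace X] (μ : Measure X)
    [IsFiniteMeasure μ] (w : X → ℝ) (hw : Measurable w) (C : ℝ)
    (hbound : ∀ x, |w x| ≤ C) (hmean : ∫ x, w x ∂μ = 0)
    (hne : ¬ (w =ᵐ[μ] fun _ => (0 : ℝ))) :
    Tendsto (fun a : ℝ =>
        ∫ x, w x * Real.log (Real.sqrt ((w x) ^ 2 + a ^ 2) - w x) ∂μ)
      (nhdsWithin 0 (Set.Ioi 0)) atBot := by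
  have hw_int : Integrable w μ := continuous_id.integrable_comp_of_abs_le hw hbound
  set m := ∫ x, max (w x) 0 ∂μ
  have hm : 0 < m := integral_max_zero_pos_of_integral_eq_zero hw_int hmean hne
  have hbound_integral : ∀ a > 0,
      ∫ x, w x * log (√(w x ^ 2 + a ^ 2) - w x) ∂μ ≤ m * log a + μ.real Set.univ := by
    intro a ha
    calc ∫ x, w x * log (√(w x ^ 2 + a ^ 2) - w x) ∂μ
        ≤ ∫ x, (max (w x) 0 * log a + 1) ∂μ :=
          integral_mono ((continuous_mul_log_sqrt_sq_add_sq_sub ha.ne').integrable_comp_of_abs_le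
            hw hbound) ((hw_int.pos_part.mul_const _).add (integrable_const 1))
            fun x => mul_log_sqrt_sq_add_sq_sub_le ha (w x)
      _ = m * log a + μ.real Set.univ := by
          rw [integral_add (hw_int.pos_part.mul_const _) (integrable_const 1), integral_mul_const,
            integral_const, smul_eq_mul, mul_one]
  have hlim : Tendsto (fun a => m * log a + μ.real Set.univ) (nhdsWithin 0 (Set.Ioi 0)) atBot :=
    tendsto_atBot_add_const_right _ _ (tendsto_log_nhdsGT_zero.const_mul_atBot hm)
  exact tendsto_atBot_mono' _ (eventually_nhdsWithin_of_forall hbound_integral) hlim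

/-- If `μ` is a finite measure, `w` is measurable and bounded by `C > 0`, has zero mean,
and is not `μ`-a.e. zero, then `∫ w · log (√(w² + a²) − w) dμ → −∞` as `a → 0⁺`. -/
theorem integral_tendsto_atBot_of_mean_zero {X : Type*} [MeasurableSpace X] (μ : Measure X)
    [IsFiniteMeasure μ] (w : X → ℝ) (hw : Measurable w) (C : ℝ) (hC : 0 < C)
    (hbound : ∀ x, |w x| ≤ C) (hmean : ∫ x, w x ∂μ = 0)
    (hne : ¬ (w =ᵐ[μ] fun _ => (0 : ℝ))) :
    Tendsto (fun a : ℝ =>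
        ∫ x, w x * Real.log (Real.sqrt ((w x) ^ 2 + a ^ 2) - w x) ∂μ)
      (nhdsWithin 0 (Set.Ioi 0)) atBot :=
  integral_tendsto_atBot_of_mean_zero_general μ w hw C hbound hmean hne
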